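/- Let ν ≥ 2 be an integer and let p be a source with p(1) ≤ 1/(2^ν − 1). Then there exists a codeword-length vector l ∈ ℒ_n with R*(l,p) = R*_opt(p) and l(1) ≥ ν. -/

import Mathlib

/-- A source: a positive, monotonically nonincreasing probability mass function on `Fin n`. -/
def IsSource (n : ℕ) (p : Fin n → ℝ) : Prop :=
  (∀ i, 0 < p i) ∧ (∑ i, p i = 1) ∧ (∀ i j : Fin n, i ≤ j → p j ≤ p i)

/-- A codeword-length vector: positive integer lengths satisfying the Kraft inequality. -/
def IsCLV (n : ℕ) (l : Fin n → ℤ) : Prop :=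
  (∀ i, 1 ≤ l i) ∧ (∑ i, (2:ℝ) ^ (-(l i)) ≤ 1)

/-- Maximum pointwise redundancy `R*(l,p) = max_i (l(i) + lg p(i))`. -/
noncomputable def Rstar (n : ℕ) (l : Fin n → ℤ) (p : Fin n → ℝ) : ℝ :=
  ⨆ i : Fin n, ((l i : ℝ) + Real.logb 2 (p i))

/-- Minimum maximum pointwise redundancy over all codeword-length vectors. -/
noncomputable def RstarOpt (n : ℕ) (p : Fin n → ℝ) : ℝ :=
  sInf {r : ℝ | ∃ l : Fin n → ℤ, IsCLV n l ∧ Rstar n l p = r}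

/-!
Rounding `r - lg p(i)` down at the optimal redundancy `r` gives an optimal length vector: just
above `r` these floors do not change, and they dominate the lengths of every code whose
redundancy lies there, so they inherit Kraft's inequality. Its first length is at least `ν`
because every code has redundancy at least `ν + lg p(1)`: a first codeword shorter than `ν`
leaves Kraft budget at most `1 - 2^(1-ν)` for the remaining mass `1 - p(1)`, and at redundancy
below `ν + lg p(1)` this forces `p(1) > 1/(2^ν - 1)`.
-/

open Filter Topology Finset

section

variable {n : ℕ} {p : Fin n → ℝ} {l : Fin n → ℤ}

theorem add_logb_le_rstar (l : Fin n → ℤ) (p : Fin n → ℝ) (i : Fin n) :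
    (l i : ℝ) + Real.logb 2 (p i) ≤ Rstar n l p :=
  le_ciSup (f := fun i => (l i : ℝ) + Real.logb 2 (p i)) (Set.finite_range _).bddAbove i

theorem le_two_rpow_rstar_mul (l : Fin n → ℤ) {i : Fin n} (hpi : 0 < p i) :
    p i ≤ 2 ^ Rstar n l p * (2 : ℝ) ^ (-l i) := by
  have h : Real.logb 2 (p i) ≤ Rstar n l p - l i := by
    linarith [add_logb_le_rstar l p i]
  calc p i ≤ 2 ^ (Rstar n l p - l i) := (Real.logb_le_iff_le_rpow one_lt_two hpi).1 h
    _ = 2 ^ Rstar n l p * (2 : ℝ) ^ (-l i) := by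
      rw [Real.rpow_sub two_pos, Real.rpow_intCast, zpow_neg, div_eq_mul_inv]

theorem rstar_nonneg (hpos : ∀ i, 0 < p i) (hsum : ∑ i, p i = 1) (hl : IsCLV n l) :
    0 ≤ Rstar n l p := by
  have h : (1 : ℝ) ≤ 2 ^ Rstar n l p :=
    calc (1 : ℝ) = ∑ i, p i := hsum.symm
      _ ≤ ∑ i, 2 ^ Rstar n l p * (2 : ℝ) ^ (-l i) :=
        sum_le_sum fun i _ => le_two_rpow_rstar_mul l (hpos i)
      _ = 2 ^ Rstar n l p * ∑ i, (2 : ℝ) ^ (-l i) := (mul_sum ..).symm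
      _ ≤ 2 ^ Rstar n l p := mul_le_of_le_one_right (by positivity) hl.2
  exact (Real.rpow_le_rpow_left_iff one_lt_two).1 (by rwa [Real.rpow_zero])

theorem IsCLV.mono {l' : Fin n → ℤ} (hl : IsCLV n l) (hle : ∀ i, l i ≤ l' i) : IsCLV n l' :=
  ⟨fun i => (hl.1 i).trans (hle i),
    (sum_le_sum fun i _ => zpow_le_zpow_right₀ one_le_two (neg_le_neg (hle i))).trans hl.2⟩

theorem isCLV_const : IsCLV n fun _ => n := by
  refine ⟨fun i => by have := i.pos; dsimp only; omega, ?_⟩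
  rw [sum_const, card_univ, Fintype.card_fin, nsmul_eq_mul, zpow_neg, zpow_natCast,
    mul_inv_le_iff₀ (by positivity), one_mul]
  exact_mod_cast n.lt_two_pow_self.le

theorem isGLB_rstarOpt (hpos : ∀ i, 0 < p i) (hsum : ∑ i, p i = 1) :
    IsGLB {r | ∃ l, IsCLV n l ∧ Rstar n l p = r} (RstarOpt n p) :=
  Real.isGLB_sInf ⟨_, _, isCLV_const, rfl⟩
    ⟨0, by rintro _ ⟨l, hl, rfl⟩; exact rstar_nonneg hpos hsum hl⟩

noncomputable def floorLengths (p : Fin n → ℝ) (r : ℝ) (i : Fin n) : ℤ :=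
  ⌊r - Real.logb 2 (p i)⌋

theorem le_floorLengths_of_rstar_le {r : ℝ} (h : Rstar n l p ≤ r) (i : Fin n) :
    l i ≤ floorLengths p r i :=
  Int.le_floor.2 (by linarith [add_logb_le_rstar l p i])

theorem rstar_floorLengths_le [Nonempty (Fin n)] (p : Fin n → ℝ) (r : ℝ) :
    Rstar n (floorLengths p r) p ≤ r :=
  ciSup_le fun i => by unfold floorLengths; linarith [Int.floor_le (r - Real.logb 2 (p i))]

theorem eventually_floorLengths_eq (p : Fin n → ℝ) (r : ℝ) :
    ∀ᶠ s in 𝓝[≥] r, floorLengths p s = floorLengths p r := by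
  refine (eventually_all.2 fun i => ?_).mono fun s hs => funext hs
  set a := Real.logb 2 (p i)
  have hr : r < ⌊r - a⌋ + 1 + a := by linarith [Int.lt_floor_add_one (r - a)]
  filter_upwards [Ico_mem_nhdsGE hr] with s hs
  show ⌊s - a⌋ = ⌊r - a⌋
  exact Int.floor_eq_iff.2 ⟨by linarith [Int.floor_le (r - a), hs.1], by linarith [hs.2]⟩

theorem isCLV_floorLengths_rstarOpt (hpos : ∀ i, 0 < p i) (hsum : ∑ i, p i = 1) :
    IsCLV n (floorLengths p (RstarOpt n p)) := by
  obtain ⟨_, ⟨l, hl, rfl⟩, heq⟩ := ((isGLB_rstarOpt hpos hsum).frequently_mem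
    ⟨_, _, isCLV_const, rfl⟩).and_eventually (eventually_floorLengths_eq p _) |>.exists
  exact hl.mono fun i => heq ▸ le_floorLengths_of_rstar_le le_rfl i

theorem nat_add_logb_le_rstar (hpos : ∀ i, 0 < p i) (hsum : ∑ i, p i = 1) (hl : IsCLV n l)
    {ν : ℕ} (hν : 2 ≤ ν) {i : Fin n} (hpi : p i ≤ 1 / ((2 : ℝ) ^ ν - 1)) :
    ν + Real.logb 2 (p i) ≤ Rstar n l p := by
  by_cases hli : (ν : ℤ) ≤ l i
  · calc (ν : ℝ) + Real.logb 2 (p i) ≤ l i + Real.logb 2 (p i) := by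
          gcongr; exact_mod_cast hli
      _ ≤ Rstar n l p := add_logb_le_rstar l p i
  by_contra! hR
  set R := Rstar n l p
  set x : ℝ := 2 ^ ν
  have hx : 4 ≤ x :=
    calc (4 : ℝ) = 2 ^ 2 := by norm_num
      _ ≤ x := pow_le_pow_right₀ one_le_two hν
  have h2R : (2 : ℝ) ^ R < p i * x :=
    calc (2 : ℝ) ^ R < 2 ^ ((ν : ℝ) + Real.logb 2 (p i)) :=
          Real.rpow_lt_rpow_of_exponent_lt one_lt_two hR
      _ = p i * x := by
        rw [Real.rpow_add two_pos, Real.rpow_natCast, Real.rpow_logb two_pos (by norm_num) (hpos i),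
          mul_comm]
  have hli' : 2 / x ≤ (2 : ℝ) ^ (-l i) :=
    calc 2 / x = (2 : ℝ) ^ ((1 : ℤ) - ν) := by rw [zpow_sub₀ two_ne_zero]; simp [x]
      _ ≤ _ := zpow_le_zpow_right₀ one_le_two (by omega)
  have hrest : 1 - p i ≤ 2 ^ R * (1 - (2 : ℝ) ^ (-l i)) := by
    have hp := add_sum_erase univ p (mem_univ i)
    have hk := add_sum_erase univ (fun j => (2 : ℝ) ^ (-l j)) (mem_univ i)
    calc 1 - p i = ∑ j ∈ univ.erase i, p j := by linarith
      _ ≤ ∑ j ∈ univ.erase i, 2 ^ R * (2 : ℝ) ^ (-l j) :=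
        sum_le_sum fun j _ => le_two_rpow_rstar_mul l (hpos j)
      _ = 2 ^ R * ∑ j ∈ univ.erase i, (2 : ℝ) ^ (-l j) := (mul_sum ..).symm
      _ ≤ 2 ^ R * (1 - (2 : ℝ) ^ (-l i)) := by gcongr; linarith [hl.2]
  have hlt : 1 - p i < p i * (x - 2) :=
    calc 1 - p i ≤ 2 ^ R * (1 - 2 / x) := hrest.trans (by gcongr)
      _ < p i * x * (1 - 2 / x) := by
        gcongr
        rw [sub_pos, div_lt_one (by positivity)]
        linarith
      _ = p i * (x - 2) := by field_simp
  have hle : p i * (x - 1) ≤ 1 := (le_div_iff₀ (by linarith)).1 hpi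
  linarith

end

theorem stmt17 (n : ℕ) (hn : 2 ≤ n) (ν : ℕ) (hν : 2 ≤ ν)
    (p : Fin n → ℝ) (hp : IsSource n p)
    (h1 : p ⟨0, by omega⟩ ≤ 1 / ((2:ℝ) ^ ν - 1)) :
    ∃ l : Fin n → ℤ, IsCLV n l ∧ Rstar n l p = RstarOpt n p ∧
      (ν:ℤ) ≤ l ⟨0, by omega⟩ := by
  obtain ⟨hpos, hsum, -⟩ := hp
  have : Nonempty (Fin n) := ⟨⟨0, by omega⟩⟩
  have hglb := isGLB_rstarOpt hpos hsum
  have hl := isCLV_floorLengths_rstarOpt hpos hsum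
  refine ⟨_, hl, (rstar_floorLengths_le p _).antisymm (hglb.1 ⟨_, hl, rfl⟩), ?_⟩
  have : ν + Real.logb 2 (p ⟨0, _⟩) ≤ RstarOpt n p :=
    hglb.2 fun _ ⟨l, hl, hr⟩ => hr ▸ nat_add_logb_le_rstar hpos hsum hl hν h1
  exact Int.le_floor.2 (by push_cast; linarith)
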